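/- Let G be a finite simple graph, let R and S be disjoint subsets of V(G), and let T = R ∪ S. Let ρ be an R-type and σ an S-type that are compatible, and let τ be the merge type of ρ and σ. Then for every B_R ⊆ R and B_S ⊆ S, every independent set C_R ⊆ R of G[R] with |C_R ∩ B_R| ≤ 1 that is valid relative to B_R and has R-type ρ relative to B_R, and every independent set C_S ⊆ S of G[S] with |C_S ∩ B_S| ≤ 1 that is valid relative to B_S and has S-type σ relative to B_S, the set C_R ∪ C_S is an independent set of G[T], is valid relative to B_R ∪ B_S, and its T-type relative to B_R ∪ B_S is τ. -/

import Mathlib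

open scoped Classical

namespace BCol

/-- The three possible descriptions of a color class on an equivalence class:
`none`, `contains`, or `demand`. -/
inductive Desc where
  | none
  | contains
  | demand
deriving DecidableEq

variable {V : Type*}

/-- The neighborhood of `v` outside of `U`, i.e. `N_G(v) \ U`. -/
def extN (G : SimpleGraph V) (U : Set V) (v : V) : Set V := G.neighborSet v \ U

/-- The `~_U`-equivalence class of `u`: the vertices of `U` with the same
neighborhood outside of `U` as `u`. -/
def cls (G : SimpleGraph V) (U : Set V) (u : V) : Set V :=
  {v | v ∈ U ∧ extN G U v = extN G U u}

/-- The set of equivalence classes `U/~_U`. -/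
def eqClasses (G : SimpleGraph V) (U : Set V) : Set (Set V) :=
  {Q | ∃ u ∈ U, Q = cls G U u}

/-- The equivalence classes of `~_U`, as a type. -/
abbrev Classes (G : SimpleGraph V) (U : Set V) := {Q // Q ∈ eqClasses G U}

/-- A `U`-type: a pair of a map `U/~_U → {none, contains, demand}` and a bit. -/
abbrev UType (G : SimpleGraph V) (U : Set V) := (Classes G U → Desc) × Bool

/-- The neighborhood of `v` in the induced subgraph `G[U]`. -/
def indN (G : SimpleGraph V) (U : Set V) (v : V) : Set V := G.neighborSet v ∩ U

/-- `C` is an independent set of the induced subgraph `G[U]`. -/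
def IndepIn (G : SimpleGraph V) (U C : Set V) : Prop :=
  C ⊆ U ∧ ∀ u ∈ C, ∀ v ∈ C, ¬ G.Adj u v

/-- The `desc`-component of the `U`-type of the color class `C` relative to the set `B`
of partial `b`-vertices. -/
noncomputable def descOf (G : SimpleGraph V) (U B C : Set V) (Q : Classes G U) : Desc :=
  if (Q.1 ∩ C).Nonempty then Desc.contains
  else if ∃ v ∈ B ∩ Q.1, indN G U v ∩ C = ∅ then Desc.demand
  else Desc.none

/-- The `U`-type of the color class `C` relative to the set `B` of partial `b`-vertices. -/
noncomputable def typeOf (G : SimpleGraph V) (U B C : Set V) : UType G U :=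
  (descOf G U B C, if (C ∩ B).Nonempty then true else false)

/-- `C` is valid relative to `B`: there is no class `Q ∈ U/~_U` intersecting `C` such
that some `v ∈ B ∩ Q` has closed neighborhood in `G[U]` disjoint from `C`. -/
def ValidClass (G : SimpleGraph V) (U B C : Set V) : Prop :=
  ¬ ∃ Q ∈ eqClasses G U, (Q ∩ C).Nonempty ∧
      ∃ v ∈ B ∩ Q, (insert v (indN G U v)) ∩ C = ∅

/-- `Q_R Q_S ∈ E(H)`: every vertex of `Q_R` is adjacent to every vertex of `Q_S`. -/
def OpEdge (G : SimpleGraph V) (QR QS : Set V) : Prop :=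
  ∀ u ∈ QR, ∀ v ∈ QS, G.Adj u v

/-- An `R`-type `ρ` and an `S`-type `σ` are compatible. -/
def CompatibleTypes (G : SimpleGraph V) (R S : Set V)
    (ρ : UType G R) (σ : UType G S) : Prop :=
  (¬ (ρ.2 = true ∧ σ.2 = true)) ∧
  (¬ ∃ (QR : Classes G R) (QS : Classes G S),
      OpEdge G QR.1 QS.1 ∧ ρ.1 QR = Desc.contains ∧ σ.1 QS = Desc.contains) ∧
  (∀ Q : Classes G (R ∪ S),
    ((∃ QR : Classes G R, QR.1 ⊆ Q.1 ∧ ρ.1 QR = Desc.contains) ∨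
     (∃ QS : Classes G S, QS.1 ⊆ Q.1 ∧ σ.1 QS = Desc.contains)) →
    ((∀ QR : Classes G R, QR.1 ⊆ Q.1 → ρ.1 QR = Desc.demand →
        ∃ QS : Classes G S, σ.1 QS = Desc.contains ∧ OpEdge G QR.1 QS.1) ∧
     (∀ QS : Classes G S, QS.1 ⊆ Q.1 → σ.1 QS = Desc.demand →
        ∃ QR : Classes G R, ρ.1 QR = Desc.contains ∧ OpEdge G QR.1 QS.1)))

/-- The merge type of an `R`-type `ρ` and an `S`-type `σ`. -/
noncomputable def mergeType (G : SimpleGraph V) (R S : Set V)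
    (ρ : UType G R) (σ : UType G S) : UType G (R ∪ S) :=
  (fun Q =>
    if (∃ QR : Classes G R, QR.1 ⊆ Q.1 ∧ ρ.1 QR = Desc.contains) ∨
       (∃ QS : Classes G S, QS.1 ⊆ Q.1 ∧ σ.1 QS = Desc.contains) then
      Desc.contains
    else if (∃ QR : Classes G R, QR.1 ⊆ Q.1 ∧ ρ.1 QR = Desc.demand ∧
              ∀ QS : Classes G S, OpEdge G QR.1 QS.1 → σ.1 QS ≠ Desc.contains) ∨
            (∃ QS : Classes G S, QS.1 ⊆ Q.1 ∧ σ.1 QS = Desc.demand ∧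
              ∀ QR : Classes G R, OpEdge G QR.1 QS.1 → ρ.1 QR ≠ Desc.contains) then
      Desc.demand
    else Desc.none,
   ρ.2 || σ.2)

/-- `((C_1, …, C_k), B)` is a partial `b`-coloring of `G[U]` with `k` colors:
the `C_i` partition `U` into independent sets of `G[U]`, `B ⊆ U`, and each color class
contains at most one vertex of `B`. -/
def IsPartialBColoring (G : SimpleGraph V) (U : Set V) {k : ℕ}
    (C : Fin k → Set V) (B : Set V) : Prop :=
  (⋃ i, C i) = U ∧ (Pairwise fun i j => Disjoint (C i) (C j)) ∧
  (∀ i, IndepIn G U (C i)) ∧ B ⊆ U ∧ ∀ i, (C i ∩ B).Subsingleton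

/-- A valid partial `b`-coloring of `G[U]`: every color class is valid relative to `B`. -/
def IsValidPartialBColoring (G : SimpleGraph V) (U : Set V) {k : ℕ}
    (C : Fin k → Set V) (B : Set V) : Prop :=
  IsPartialBColoring G U C B ∧ ∀ i, ValidClass G U B (C i)

/-- The `U`-signature of the partial `b`-coloring `(C, B)`: to each `U`-type `τ` it
assigns the number of color classes whose `U`-type relative to `B` is `τ`. -/
noncomputable def sigOf (G : SimpleGraph V) (U : Set V) {k : ℕ}
    (C : Fin k → Set V) (B : Set V) : UType G U → ℕ :=
  fun τ => Nat.card {i : Fin k // typeOf G U B (C i) = τ}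

/-- `σ` is a `U`-signature for `k` colors: the values of `σ` sum up to `k`. -/
def IsSignature (G : SimpleGraph V) (U : Set V) (k : ℕ) (σ : UType G U → ℕ) : Prop :=
  ∑ᶠ τ, σ τ = k

/-- A triple `(σT, σR, σS)` of signatures is compatible: there is an assignment `f` of
natural numbers to the edges of the merge skeleton (i.e. to the compatible pairs of an
`R`-type and an `S`-type) such that the sums of `f` over the edges incident to each
`R`-type `ρ`, to each `S`-type `σ`, and over the edges labeled by each merge type `τ`
are `σR ρ`, `σS σ`, and `σT τ`, respectively. -/
def CompatibleSignatures (G : SimpleGraph V) (R S : Set V)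
    (σT : UType G (R ∪ S) → ℕ) (σR : UType G R → ℕ) (σS : UType G S → ℕ) : Prop :=
  ∃ f : UType G R × UType G S → ℕ,
    (∀ p, ¬ CompatibleTypes G R S p.1 p.2 → f p = 0) ∧
    (∀ ρ, ∑ᶠ σ, f (ρ, σ) = σR ρ) ∧
    (∀ σ, ∑ᶠ ρ, f (ρ, σ) = σS σ) ∧
    (∀ τ, ∑ᶠ p ∈ {p : UType G R × UType G S | mergeType G R S p.1 p.2 = τ}, f p = σT τ)


/-
The classes of `~_R` and `~_S` refine those of `~_T`, and adjacency between an `R`-class and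
an `S`-class is all or nothing. Hence whether a vertex `v ∈ B_R` sees `C_S` depends only on its
`R`-class and on the `S`-classes met by `C_S`, so the `T`-type of `C_R ∪ C_S` is computed from
the two types alone. Compatibility (2) forbids edges between `C_R` and `C_S`. For validity, a
vertex `v ∈ B_R` in a class meeting `C_R ∪ C_S` whose closed neighbourhood misses it would, by
validity of `C_R`, put its `R`-class in `demand`; compatibility (3) then supplies a neighbour
of `v` in `C_S`.
-/

section Merge

variable {G : SimpleGraph V} {U W T B C BU BW CU CW R S BR BS CR CS : Set V}

lemma mem_cls_self {u : V} (hu : u ∈ U) : u ∈ cls G U u := ⟨hu, rfl⟩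

lemma cls_eq_of_mem {u v : V} (hv : v ∈ cls G U u) : cls G U v = cls G U u := by
  ext w
  exact ⟨fun hw => ⟨hw.1, hw.2.trans hv.2⟩, fun hw => ⟨hw.1, hw.2.trans hv.2.symm⟩⟩

lemma extN_eq_extN_diff (hUT : U ⊆ T) (v : V) : extN G T v = extN G U v \ T := by
  rw [extN, extN, Set.sdiff_sdiff, Set.union_eq_right.2 hUT]

lemma cls_subset_cls_of_subset (hUT : U ⊆ T) (u : V) : cls G U u ⊆ cls G T u := by
  rintro v ⟨hvU, hv⟩
  exact ⟨hUT hvU, by rw [extN_eq_extN_diff hUT, extN_eq_extN_diff hUT, hv]⟩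

def Classes.of (G : SimpleGraph V) {u : V} (hu : u ∈ U) : Classes G U :=
  ⟨cls G U u, u, hu, rfl⟩

lemma Classes.eq_cls_of_mem (Q : Classes G U) {v : V} (hv : v ∈ Q.1) : Q.1 = cls G U v := by
  obtain ⟨u, -, hQ⟩ := Q.2
  rw [hQ] at hv ⊢
  exact (cls_eq_of_mem hv).symm

lemma Classes.cls_subset (hUT : U ⊆ T) (Q : Classes G T) {v : V} (hv : v ∈ Q.1) :
    cls G U v ⊆ Q.1 :=
  Q.eq_cls_of_mem hv ▸ cls_subset_cls_of_subset hUT v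

lemma opEdge_comm {A A' : Set V} : OpEdge G A A' ↔ OpEdge G A' A :=
  ⟨fun h u hu v hv => (h v hv u hu).symm, fun h u hu v hv => (h v hv u hu).symm⟩

lemma opEdge_of_adj (hUW : Disjoint U W) {u w : V} (hw : w ∈ W)
    (h : G.Adj u w) : OpEdge G (cls G U u) (cls G W w) := by
  intro u' hu' w' hw'
  have hu'w : G.Adj u' w := (hu'.2 ▸ ⟨h, Set.disjoint_right.1 hUW hw⟩ : w ∈ extN G U u').1
  exact (hw'.2 ▸ ⟨hu'w.symm, Set.disjoint_left.1 hUW hu'.1⟩ : u' ∈ extN G W w').1.symm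

lemma descOf_eq_contains_iff {Q : Classes G U} :
    descOf G U B C Q = .contains ↔ (Q.1 ∩ C).Nonempty := by
  unfold descOf; split_ifs with h <;> simp [h]

lemma descOf_eq_demand_iff {Q : Classes G U} :
    descOf G U B C Q = .demand ↔
      ¬ (Q.1 ∩ C).Nonempty ∧ ∃ v ∈ B ∩ Q.1, indN G U v ∩ C = ∅ := by
  unfold descOf; split_ifs <;> simp_all

lemma descOf_of_mem {u : V} (hu : u ∈ U) (huC : u ∈ C) :
    descOf G U B C (Classes.of G hu) = .contains :=
  descOf_eq_contains_iff.2 ⟨u, mem_cls_self hu, huC⟩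

lemma descOf_eq_ite {Q : Classes G U} {A D : Prop} [Decidable A] [Decidable D]
    (hA : (Q.1 ∩ C).Nonempty ↔ A)
    (hD : ¬ A → ((∃ v ∈ B ∩ Q.1, indN G U v ∩ C = ∅) ↔ D)) :
    descOf G U B C Q = if A then .contains else if D then .demand else .none := by
  unfold descOf
  by_cases h : A
  · rw [if_pos (hA.2 h), if_pos h]
  · rw [if_neg (mt hA.1 h), if_neg h]
    exact if_congr (hD h) rfl rfl

lemma descOf_eq_demand_of_validClass (hvalid : ValidClass G U B C) {v : V} (hvB : v ∈ B)
    (hvU : v ∈ U) (hclosed : insert v (indN G U v) ∩ C = ∅) :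
    descOf G U B C (Classes.of G hvU) = .demand := by
  refine descOf_eq_demand_iff.2 ⟨fun hne => ?_, v, ⟨hvB, mem_cls_self hvU⟩, ?_⟩
  · exact hvalid ⟨_, (Classes.of G hvU).2, hne, v, ⟨hvB, mem_cls_self hvU⟩, hclosed⟩
  · exact Set.subset_eq_empty (Set.inter_subset_inter_left _ (Set.subset_insert _ _)) hclosed

lemma exists_subset_descOf_eq_contains_iff (hUT : U ⊆ T) (hCU : CU ⊆ U) (Q : Classes G T) :
    (∃ QU : Classes G U, QU.1 ⊆ Q.1 ∧ descOf G U BU CU QU = .contains) ↔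
      (Q.1 ∩ CU).Nonempty := by
  constructor
  · rintro ⟨QU, hsub, hQU⟩
    obtain ⟨x, hxQ, hxC⟩ := descOf_eq_contains_iff.1 hQU
    exact ⟨x, hsub hxQ, hxC⟩
  · rintro ⟨x, hxQ, hxC⟩
    exact ⟨Classes.of G (hCU hxC), Q.cls_subset hUT hxQ, descOf_of_mem _ hxC⟩

lemma indN_inter_union_eq_empty_iff (hUT : U ⊆ T) (hCU : CU ⊆ U) (hCW : CW ⊆ T) {v : V} :
    indN G T v ∩ (CU ∪ CW) = ∅ ↔
      indN G U v ∩ CU = ∅ ∧ ∀ x ∈ CW, ¬ G.Adj v x := by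
  simp only [Set.eq_empty_iff_forall_notMem, indN, Set.mem_inter_iff, Set.mem_union,
    SimpleGraph.mem_neighborSet]
  constructor
  · intro h
    exact ⟨fun x hx => h x ⟨⟨hx.1.1, hUT hx.1.2⟩, Or.inl hx.2⟩,
      fun x hx hadj => h x ⟨⟨hadj, hCW hx⟩, Or.inr hx⟩⟩
  · rintro ⟨hU, hW⟩ x ⟨⟨hadj, -⟩, hxU | hxW⟩
    · exact hU x ⟨⟨hadj, hCU hxU⟩, hxU⟩
    · exact hW x hxW hadj

lemma forall_not_adj_iff (hUW : Disjoint U W) (hCW : CW ⊆ W) {v : V} (hv : v ∈ U) :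
    (∀ x ∈ CW, ¬ G.Adj v x) ↔
      ∀ QW : Classes G W, OpEdge G (cls G U v) QW.1 → descOf G W BW CW QW ≠ .contains := by
  constructor
  · intro h QW hop hQW
    obtain ⟨x, hxQ, hxC⟩ := descOf_eq_contains_iff.1 hQW
    exact h x hxC (hop v (mem_cls_self hv) x hxQ)
  · intro h x hxC hadj
    exact h (Classes.of G (hCW hxC)) (opEdge_of_adj hUW (hCW hxC) hadj) (descOf_of_mem _ hxC)

lemma exists_indN_inter_union_eq_empty_iff (hUW : Disjoint U W) (hUT : U ⊆ T) (hWT : W ⊆ T)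
    (hBU : BU ⊆ U) (hCU : CU ⊆ U) (hCW : CW ⊆ W) (Q : Classes G T)
    (hQ : ¬ (Q.1 ∩ CU).Nonempty) :
    (∃ v ∈ BU ∩ Q.1, indN G T v ∩ (CU ∪ CW) = ∅) ↔
      ∃ QU : Classes G U, QU.1 ⊆ Q.1 ∧ descOf G U BU CU QU = .demand ∧
        ∀ QW : Classes G W, OpEdge G QU.1 QW.1 → descOf G W BW CW QW ≠ .contains := by
  constructor
  · rintro ⟨v, ⟨hvB, hvQ⟩, hv⟩
    rw [indN_inter_union_eq_empty_iff hUT hCU (hCW.trans hWT),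
      forall_not_adj_iff hUW hCW (hBU hvB)] at hv
    have hsub := Q.cls_subset hUT hvQ
    refine ⟨Classes.of G (hBU hvB), hsub,
      descOf_eq_demand_iff.2 ⟨?_, v, ⟨hvB, ?_⟩, hv.1⟩, hv.2⟩
    · exact fun ⟨x, hxQ, hxC⟩ => hQ ⟨x, hsub hxQ, hxC⟩
    · exact mem_cls_self (hBU hvB)
  · rintro ⟨QU, hsub, hdem, hW⟩
    obtain ⟨-, v, ⟨hvB, hvQ⟩, hv⟩ := descOf_eq_demand_iff.1 hdem
    refine ⟨v, ⟨hvB, hsub hvQ⟩, ?_⟩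
    rw [indN_inter_union_eq_empty_iff hUT hCU (hCW.trans hWT),
      forall_not_adj_iff hUW hCW (hBU hvB), ← QU.eq_cls_of_mem hvQ]
    exact ⟨hv, hW⟩

lemma descOf_eq_demand_of_insert_indN_inter_union_eq_empty (hUW : Disjoint U W) (hUT : U ⊆ T)
    (hWT : W ⊆ T) (hCU : CU ⊆ U) (hCW : CW ⊆ W) (hvalid : ValidClass G U BU CU) {v : V}
    (hvB : v ∈ BU) (hvU : v ∈ U) (hclosed : insert v (indN G T v) ∩ (CU ∪ CW) = ∅) :
    descOf G U BU CU (Classes.of G hvU) = .demand ∧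
      ∀ QW : Classes G W, OpEdge G (cls G U v) QW.1 → descOf G W BW CW QW ≠ .contains := by
  have hvC : v ∉ CU ∪ CW := fun h => hclosed.subset ⟨Set.mem_insert v _, h⟩
  rw [Set.insert_inter_of_notMem hvC, indN_inter_union_eq_empty_iff hUT hCU (hCW.trans hWT),
    forall_not_adj_iff hUW hCW hvU] at hclosed
  refine ⟨descOf_eq_demand_of_validClass hvalid hvB hvU ?_, hclosed.2⟩
  rw [Set.insert_inter_of_notMem fun h => hvC (Or.inl h)]
  exact hclosed.1

lemma inter_union_nonempty_iff (hCR : CR ⊆ R) (hCS : CS ⊆ S) (Q : Classes G (R ∪ S)) :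
    (Q.1 ∩ (CR ∪ CS)).Nonempty ↔
      (∃ QR : Classes G R, QR.1 ⊆ Q.1 ∧ descOf G R BR CR QR = .contains) ∨
        ∃ QS : Classes G S, QS.1 ⊆ Q.1 ∧ descOf G S BS CS QS = .contains := by
  rw [exists_subset_descOf_eq_contains_iff Set.subset_union_left hCR,
    exists_subset_descOf_eq_contains_iff Set.subset_union_right hCS,
    Set.inter_union_distrib_left, Set.union_nonempty]

lemma union_inter_union_eq (hRS : Disjoint R S) (hBR : BR ⊆ R) (hBS : BS ⊆ S) (hCR : CR ⊆ R)
    (hCS : CS ⊆ S) : (CR ∪ CS) ∩ (BR ∪ BS) = CR ∩ BR ∪ CS ∩ BS := by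
  rw [Set.union_inter_distrib_right, Set.inter_union_distrib_left, Set.inter_union_distrib_left,
    (hRS.mono hCR hBS).inter_eq, (hRS.symm.mono hCS hBR).inter_eq, Set.union_empty,
    Set.empty_union]

lemma typeOf_union_eq_mergeType (hRS : Disjoint R S) (hBR : BR ⊆ R) (hBS : BS ⊆ S)
    (hCR : CR ⊆ R) (hCS : CS ⊆ S) :
    typeOf G (R ∪ S) (BR ∪ BS) (CR ∪ CS) =
      mergeType G R S (typeOf G R BR CR) (typeOf G S BS CS) := by
  refine Prod.ext (funext fun Q => ?_) ?_
  · dsimp only [typeOf, mergeType]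
    refine descOf_eq_ite (inter_union_nonempty_iff hCR hCS Q) fun hQ => ?_
    rw [← inter_union_nonempty_iff hCR hCS Q, Set.inter_union_distrib_left, Set.union_nonempty,
      not_or] at hQ
    simp only [Set.union_inter_distrib_right, Set.mem_union, or_and_right, exists_or]
    rw [exists_indN_inter_union_eq_empty_iff (BW := BS) hRS Set.subset_union_left
        Set.subset_union_right hBR hCR hCS Q hQ.1, Set.union_comm CR CS,
      exists_indN_inter_union_eq_empty_iff (BW := BR) hRS.symm Set.subset_union_right
        Set.subset_union_left hBS hCS hCR Q hQ.2]
    refine or_congr Iff.rfl (exists_congr fun QS => and_congr_right' (and_congr_right'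
      (forall_congr' fun QR => by rw [opEdge_comm])))
  · simp only [typeOf, mergeType, union_inter_union_eq hRS hBR hBS hCR hCS, Set.union_nonempty]
    by_cases h₁ : (CR ∩ BR).Nonempty <;> by_cases h₂ : (CS ∩ BS).Nonempty <;>
      simp [h₁, h₂]

lemma not_adj_of_compatibleTypes (hRS : Disjoint R S) (hCR : CR ⊆ R) (hCS : CS ⊆ S)
    (hcomp : CompatibleTypes G R S (typeOf G R BR CR) (typeOf G S BS CS)) {u v : V}
    (hu : u ∈ CR) (hv : v ∈ CS) : ¬ G.Adj u v := fun hadj =>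
  hcomp.2.1 ⟨_, _, opEdge_of_adj hRS (hCS hv) hadj, descOf_of_mem (hCR hu) hu,
    descOf_of_mem (hCS hv) hv⟩

lemma indepIn_union (hRS : Disjoint R S)
    (hcomp : CompatibleTypes G R S (typeOf G R BR CR) (typeOf G S BS CS))
    (hR : IndepIn G R CR) (hS : IndepIn G S CS) : IndepIn G (R ∪ S) (CR ∪ CS) := by
  refine ⟨Set.union_subset_union hR.1 hS.1, ?_⟩
  rintro u (hu | hu) v (hv | hv)
  · exact hR.2 u hu v hv
  · exact not_adj_of_compatibleTypes hRS hR.1 hS.1 hcomp hu hv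
  · exact fun h => not_adj_of_compatibleTypes hRS hR.1 hS.1 hcomp hv hu h.symm
  · exact hS.2 u hu v hv

lemma validClass_union (hRS : Disjoint R S)
    (hcomp : CompatibleTypes G R S (typeOf G R BR CR) (typeOf G S BS CS))
    (hBR : BR ⊆ R) (hBS : BS ⊆ S) (hCR : CR ⊆ R) (hCS : CS ⊆ S)
    (hvalidR : ValidClass G R BR CR) (hvalidS : ValidClass G S BS CS) :
    ValidClass G (R ∪ S) (BR ∪ BS) (CR ∪ CS) := by
  rintro ⟨Q, hQ, hne, v, ⟨hvB | hvB, hvQ⟩, hclosed⟩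
  all_goals obtain ⟨hdemR, hdemS⟩ :=
    hcomp.2.2 ⟨Q, hQ⟩ ((inter_union_nonempty_iff hCR hCS ⟨Q, hQ⟩).1 hne)
  · obtain ⟨hdem, hS⟩ := descOf_eq_demand_of_insert_indN_inter_union_eq_empty (BW := BS) hRS
      Set.subset_union_left Set.subset_union_right hCR hCS hvalidR hvB (hBR hvB) hclosed
    obtain ⟨QS, hQS, hop⟩ :=
      hdemR _ (Classes.cls_subset (Q := ⟨Q, hQ⟩) Set.subset_union_left hvQ) hdem
    exact hS QS hop hQS
  · rw [Set.union_comm CR CS] at hclosed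
    obtain ⟨hdem, hR⟩ := descOf_eq_demand_of_insert_indN_inter_union_eq_empty (BW := BR)
      hRS.symm Set.subset_union_right Set.subset_union_left hCS hCR hvalidS hvB (hBS hvB) hclosed
    obtain ⟨QR, hQR, hop⟩ :=
      hdemS _ (Classes.cls_subset (Q := ⟨Q, hQ⟩) Set.subset_union_right hvQ) hdem
    exact hR QR (opEdge_comm.1 hop) hQR

end Merge

theorem merge_types_general {V : Type*} (G : SimpleGraph V)
    (R S : Set V) (hRS : Disjoint R S)
    (ρ : UType G R) (σ : UType G S) (hcomp : CompatibleTypes G R S ρ σ)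
    (BR BS CR CS : Set V) (hBR : BR ⊆ R) (hBS : BS ⊆ S)
    (hCRind : IndepIn G R CR)
    (hCRvalid : ValidClass G R BR CR) (hCRtype : typeOf G R BR CR = ρ)
    (hCSind : IndepIn G S CS)
    (hCSvalid : ValidClass G S BS CS) (hCStype : typeOf G S BS CS = σ) :
    IndepIn G (R ∪ S) (CR ∪ CS) ∧
    ValidClass G (R ∪ S) (BR ∪ BS) (CR ∪ CS) ∧
    typeOf G (R ∪ S) (BR ∪ BS) (CR ∪ CS) = mergeType G R S ρ σ := by
  subst hCRtype hCStype
  exact ⟨indepIn_union hRS hcomp hCRind hCSind,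
    validClass_union hRS hcomp hBR hBS hCRind.1 hCSind.1 hCRvalid hCSvalid,
    typeOf_union_eq_mergeType hRS hBR hBS hCRind.1 hCSind.1⟩

/-- Merging types (Lemma: merge). Let `R, S` be disjoint vertex subsets of a finite
graph `G` and `T = R ∪ S`. If `ρ` is an `R`-type and `σ` an `S`-type which are
compatible, then for all `B_R ⊆ R`, `B_S ⊆ S`, every valid independent color class
`C_R ⊆ R` of `G[R]` of `R`-type `ρ` relative to `B_R` and every valid independent color
class `C_S ⊆ S` of `G[S]` of `S`-type `σ` relative to `B_S`, the union `C_R ∪ C_S` is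
an independent set of `G[T]`, is valid relative to `B_R ∪ B_S`, and its `T`-type
relative to `B_R ∪ B_S` is the merge type of `ρ` and `σ`. -/
theorem merge_types {V : Type*} [Fintype V] [DecidableEq V] (G : SimpleGraph V)
    (R S : Set V) (hRS : Disjoint R S)
    (ρ : UType G R) (σ : UType G S) (hcomp : CompatibleTypes G R S ρ σ)
    (BR BS CR CS : Set V) (hBR : BR ⊆ R) (hBS : BS ⊆ S)
    (hCRind : IndepIn G R CR) (hCRB : (CR ∩ BR).Subsingleton)
    (hCRvalid : ValidClass G R BR CR) (hCRtype : typeOf G R BR CR = ρ)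
    (hCSind : IndepIn G S CS) (hCSB : (CS ∩ BS).Subsingleton)
    (hCSvalid : ValidClass G S BS CS) (hCStype : typeOf G S BS CS = σ) :
    IndepIn G (R ∪ S) (CR ∪ CS) ∧
    ValidClass G (R ∪ S) (BR ∪ BS) (CR ∪ CS) ∧
    typeOf G (R ∪ S) (BR ∪ BS) (CR ∪ CS) = mergeType G R S ρ σ :=
  merge_types_general G R S hRS ρ σ hcomp BR BS CR CS hBR hBS hCRind hCRvalid hCRtype hCSind
    hCSvalid hCStype

end BCol
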